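/- As α → 0⁺, (Φ⁻¹(α))² = -2 ln α - ln(-4π ln α) + o(1), where Φ⁻¹ is the inverse of the standard normal CDF. -/

import Mathlib

/-!
Write `Q(z) = Φ(-z)` for the Gaussian tail. The Mills ratio bounds
`φ(z) z / (1 + z²) ≤ Q(z) ≤ φ(z) / z` give `z Q(z) / φ(z) → 1`, that is
`-2 log Q(z) = z² + log (2π z²) + o(1)` as `z → ∞`.
Put `z = -Φ⁻¹(α)`, so that `Q(z) = α` and `z → ∞` as `α → 0⁺`, and let `w = z²`,
`L = -2 log α`.
The relation `L = w + log (2π w) + o(1)` forces `L / w → 1`, hence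
`log (2π L) = log (2π w) + o(1)` and `w = L - log (2π L) + o(1)`; this is the claim,
since `-4π log α = 2π L`.
-/

open Real Set Filter Topology

noncomputable def phi (y : ℝ) : ℝ := (Real.sqrt (2 * Real.pi))⁻¹ * Real.exp (-y ^ 2 / 2)

noncomputable def Phi (x : ℝ) : ℝ := ∫ y in Set.Iic x, phi y

noncomputable def PhiInv (a : ℝ) : ℝ := Function.invFun Phi a

open MeasureTheory ProbabilityTheory

lemma phi_eq_gaussianPDFReal : phi = gaussianPDFReal 0 1 := by
  ext y
  simp [phi, gaussianPDFReal]

lemma phi_pos (y : ℝ) : 0 < phi y := by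
  rw [phi_eq_gaussianPDFReal]
  exact gaussianPDFReal_pos 0 1 y one_ne_zero

lemma integrable_phi : Integrable phi := by
  rw [phi_eq_gaussianPDFReal]
  exact integrable_gaussianPDFReal 0 1

lemma integral_phi : ∫ y, phi y = 1 := by
  rw [phi_eq_gaussianPDFReal]
  exact integral_gaussianPDFReal_eq_one 0 one_ne_zero

lemma log_phi (y : ℝ) : log (phi y) = -y ^ 2 / 2 - log (2 * π) / 2 := by
  rw [phi, log_mul (by positivity) (exp_ne_zero _), log_inv, log_exp, log_sqrt (by positivity)]
  ring

lemma hasDerivAt_phi (y : ℝ) : HasDerivAt phi (-(y * phi y)) y := by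
  have h : HasDerivAt (fun x : ℝ => -x ^ 2 / 2) (-y) y := by
    simpa [neg_div] using (hasDerivAt_pow 2 y).neg.div_const 2
  exact (h.exp.const_mul (√(2 * π))⁻¹).congr_deriv (by simp only [phi]; ring)

lemma tendsto_phi_atTop : Tendsto phi atTop (𝓝 0) := by
  have h : Tendsto (fun y : ℝ => -y ^ 2 / 2) atTop atBot :=
    (tendsto_neg_atTop_atBot.comp (tendsto_pow_atTop two_ne_zero)).atBot_div_const two_pos
  have := (tendsto_exp_atBot.comp h).const_mul (√(2 * π))⁻¹
  rwa [mul_zero] at this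

lemma integral_Ioi_eq_of_hasDerivAt_neg {g g' : ℝ → ℝ} (z : ℝ)
    (hderiv : ∀ y, HasDerivAt g (-g' y) y) (hint : IntegrableOn g' (Ioi z))
    (hlim : Tendsto g atTop (𝓝 0)) : ∫ y in Ioi z, g' y = g z := by
  simpa using integral_Ioi_of_hasDerivAt_of_tendsto' (fun y _ => (hderiv y).neg)
    (by simpa using hint) hlim.neg

lemma integrable_mul_phi : Integrable fun y => y * phi y := by
  refine ((integrable_mul_exp_neg_mul_sq one_half_pos).const_mul (√(2 * π))⁻¹).congr
    (.of_forall fun y => ?_)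
  simp only [phi]
  ring_nf

lemma integral_Ioi_mul_phi (z : ℝ) : ∫ y in Ioi z, y * phi y = phi z :=
  integral_Ioi_eq_of_hasDerivAt_neg z hasDerivAt_phi
    integrable_mul_phi.integrableOn tendsto_phi_atTop

noncomputable def gaussianTail (z : ℝ) : ℝ := ∫ y in Ioi z, phi y

lemma gaussianTail_pos (z : ℝ) : 0 < gaussianTail z := by
  refine (setIntegral_pos_iff_support_of_nonneg_ae
    (.of_forall fun y => (phi_pos y).le) integrable_phi.integrableOn).2 ?_
  simp [(phi_pos _).ne', Function.support_eq_univ]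

lemma gaussianTail_le_phi_div {z : ℝ} (hz : 0 < z) : gaussianTail z ≤ phi z / z :=
  calc gaussianTail z ≤ ∫ y in Ioi z, y * phi y / z := by
        refine setIntegral_mono_on integrable_phi.integrableOn
          (integrable_mul_phi.div_const z).integrableOn measurableSet_Ioi fun y hy => ?_
        rw [le_div_iff₀ hz]
        nlinarith [phi_pos y, mem_Ioi.1 hy]
    _ = phi z / z := by rw [integral_div, integral_Ioi_mul_phi]

lemma hasDerivAt_phi_mul_div (y : ℝ) :
    HasDerivAt (fun x => phi x * (x / (1 + x ^ 2))) (-(phi y * (1 - 2 / (1 + y ^ 2) ^ 2))) y := by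
  have hy : 1 + y ^ 2 ≠ 0 := by positivity
  have hq : HasDerivAt (fun x : ℝ => 1 + x ^ 2) (2 * y) y := by
    simpa using (hasDerivAt_pow 2 y).const_add 1
  refine ((hasDerivAt_phi y).mul ((hasDerivAt_id' y).div hq hy)).congr_deriv ?_
  simp only [Pi.div_apply]
  field_simp
  ring

lemma integrable_phi_mul_one_sub : Integrable fun y => phi y * (1 - 2 / (1 + y ^ 2) ^ 2) := by
  have hmeas : Measurable fun y : ℝ => 1 - 2 / (1 + y ^ 2) ^ 2 := by fun_prop
  refine integrable_phi.mul_bdd (c := 1) hmeas.aestronglyMeasurable (.of_forall fun y => ?_)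
  have h₀ : 0 ≤ 2 / (1 + y ^ 2) ^ 2 := by positivity
  have h₂ : 2 / (1 + y ^ 2) ^ 2 ≤ 2 :=
    div_le_self zero_le_two (one_le_pow₀ (le_add_of_nonneg_right (sq_nonneg y)))
  rw [Real.norm_eq_abs, abs_le]
  constructor <;> linarith

lemma tendsto_phi_mul_div_atTop : Tendsto (fun z => phi z * (z / (1 + z ^ 2))) atTop (𝓝 0) := by
  refine tendsto_of_tendsto_of_tendsto_of_le_of_le' tendsto_const_nhds tendsto_phi_atTop ?_ ?_ <;>
    filter_upwards [eventually_ge_atTop 0] with z hz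
  · exact mul_nonneg (phi_pos z).le (by positivity)
  · refine mul_le_of_le_one_right (phi_pos z).le ((div_le_one (by positivity)).2 ?_)
    nlinarith

lemma phi_mul_div_le_gaussianTail (z : ℝ) : phi z * (z / (1 + z ^ 2)) ≤ gaussianTail z := by
  rw [← integral_Ioi_eq_of_hasDerivAt_neg z hasDerivAt_phi_mul_div
    integrable_phi_mul_one_sub.integrableOn tendsto_phi_mul_div_atTop]
  refine setIntegral_mono_on integrable_phi_mul_one_sub.integrableOn integrable_phi.integrableOn
    measurableSet_Ioi fun y _ => mul_le_of_le_one_right (phi_pos y).le ?_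
  have : 0 ≤ 2 / (1 + y ^ 2) ^ 2 := by positivity
  linarith

lemma tendsto_gaussianTail_atTop : Tendsto gaussianTail atTop (𝓝 0) := by
  refine tendsto_of_tendsto_of_tendsto_of_le_of_le' tendsto_const_nhds tendsto_phi_atTop
    (.of_forall fun z => (gaussianTail_pos z).le) ?_
  filter_upwards [eventually_ge_atTop 1] with z hz
  exact (gaussianTail_le_phi_div (by linarith)).trans (div_le_self (phi_pos z).le hz)

lemma Phi_eq_gaussianTail_neg (x : ℝ) : Phi x = gaussianTail (-x) := by
  rw [gaussianTail, ← integral_comp_neg_Iic]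
  simp [Phi, phi]

lemma Phi_add_gaussianTail (x : ℝ) : Phi x + gaussianTail x = 1 := by
  rw [Phi, gaussianTail, intervalIntegral.integral_Iic_add_Ioi integrable_phi.integrableOn
    integrable_phi.integrableOn, integral_phi]

lemma Phi_pos (x : ℝ) : 0 < Phi x :=
  Phi_eq_gaussianTail_neg x ▸ gaussianTail_pos (-x)

lemma monotone_Phi : Monotone Phi := fun _ _ hab =>
  setIntegral_mono_set integrable_phi.integrableOn (.of_forall fun y => (phi_pos y).le)
    (Iic_subset_Iic.2 hab).eventuallyLE

lemma continuous_Phi : Continuous Phi := by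
  have h (x : ℝ) : Phi x = Phi 0 + ∫ y in (0)..x, phi y := by
    rw [← intervalIntegral.integral_Iic_sub_Iic integrable_phi.integrableOn
      integrable_phi.integrableOn, Phi, Phi]
    ring
  exact (continuous_const.add (integrable_phi.continuous_primitive 0)).congr fun x => (h x).symm

lemma tendsto_Phi_atBot : Tendsto Phi atBot (𝓝 0) := by
  simpa only [Function.comp_def, ← Phi_eq_gaussianTail_neg] using
    tendsto_gaussianTail_atTop.comp tendsto_neg_atBot_atTop

lemma tendsto_Phi_atTop : Tendsto Phi atTop (𝓝 1) := by
  have := tendsto_gaussianTail_atTop.const_sub 1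
  rw [sub_zero] at this
  exact this.congr fun x => by linarith [Phi_add_gaussianTail x]

lemma Phi_PhiInv {α : ℝ} (h : α ∈ Ioo 0 1) : Phi (PhiInv α) = α :=
  Function.invFun_eq <| mem_range_of_exists_le_of_exists_ge continuous_Phi
    (tendsto_Phi_atBot.eventually (eventually_le_nhds h.1)).exists
    (tendsto_Phi_atTop.eventually (eventually_ge_nhds h.2)).exists

lemma tendsto_PhiInv_nhdsGT_zero : Tendsto PhiInv (𝓝[>] 0) atBot := by
  refine tendsto_atBot.2 fun b => ?_
  filter_upwards [Ioo_mem_nhdsGT one_pos, Ioo_mem_nhdsGT (Phi_pos b)] with α hα hαb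
  by_contra! hb
  exact (monotone_Phi hb.le).not_gt ((Phi_PhiInv hα).symm ▸ hαb.2)

lemma tendsto_mul_gaussianTail_div_phi :
    Tendsto (fun z => z * gaussianTail z / phi z) atTop (𝓝 1) := by
  have hlower : Tendsto (fun z : ℝ => z ^ 2 / (1 + z ^ 2)) atTop (𝓝 1) := by
    have hsq : Tendsto (fun z : ℝ => 1 + z ^ 2) atTop atTop :=
      tendsto_atTop_add_const_left _ 1 (tendsto_pow_atTop two_ne_zero)
    have := (tendsto_inv_atTop_zero.comp hsq).const_sub 1
    rw [sub_zero] at this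
    refine this.congr fun z => ?_
    simp only [Function.comp_apply]
    field_simp
    ring
  refine tendsto_of_tendsto_of_tendsto_of_le_of_le' hlower tendsto_const_nhds ?_ ?_ <;>
    filter_upwards [eventually_gt_atTop 0] with z hz
  · rw [le_div_iff₀ (phi_pos z)]
    have := mul_le_mul_of_nonneg_left (phi_mul_div_le_gaussianTail z) hz.le
    calc z ^ 2 / (1 + z ^ 2) * phi z = z * (phi z * (z / (1 + z ^ 2))) := by ring
      _ ≤ z * gaussianTail z := this
  · rw [div_le_one (phi_pos z), mul_comm, ← le_div_iff₀ hz]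
    exact gaussianTail_le_phi_div hz

lemma neg_two_mul_log_gaussianTail {z : ℝ} (hz : 0 < z) :
    -2 * log (gaussianTail z) =
      z ^ 2 + log (2 * π * z ^ 2) - 2 * log (z * gaussianTail z / phi z) := by
  rw [log_div (by positivity [gaussianTail_pos z]) (phi_pos z).ne',
    log_mul hz.ne' (gaussianTail_pos z).ne', log_mul (by positivity) (by positivity), log_pow,
    log_phi]
  push_cast
  ring

lemma tendsto_neg_two_mul_log_gaussianTail_sub :
    Tendsto (fun z => -2 * log (gaussianTail z) - (z ^ 2 + log (2 * π * z ^ 2))) atTop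
      (𝓝 0) := by
  have := ((continuousAt_log one_ne_zero).tendsto.comp tendsto_mul_gaussianTail_div_phi).const_mul
    (-2)
  rw [log_one, mul_zero] at this
  refine this.congr' ?_
  filter_upwards [eventually_gt_atTop 0] with z hz
  rw [Function.comp_apply, neg_two_mul_log_gaussianTail hz]
  ring

lemma tendsto_sub_add_log_mul {ι : Type*} {l : Filter ι} {w L : ι → ℝ} {c : ℝ} (hc : 0 < c)
    (hw : Tendsto w l atTop) (h : Tendsto (fun i => L i - (w i + log (c * w i))) l (𝓝 0)) :
    Tendsto (fun i => w i - L i + log (c * L i)) l (𝓝 0) := by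
  have hlog : Tendsto (fun i => log (c * w i) / w i) l (𝓝 0) := by
    have := (isLittleO_log_id_atTop.tendsto_div_nhds_zero.comp
      (hw.const_mul_atTop hc)).const_mul c
    rw [mul_zero] at this
    refine this.congr' ?_
    filter_upwards [hw.eventually_gt_atTop 0] with i hi
    simp only [Function.comp_apply, id]
    field_simp
  have hratio : Tendsto (fun i => L i / w i) l (𝓝 1) := by
    have := (hlog.add (h.mul (tendsto_inv_atTop_zero.comp hw))).const_add 1
    rw [mul_zero, add_zero, add_zero] at this
    refine this.congr' ?_
    filter_upwards [hw.eventually_gt_atTop 0] with i hi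
    simp only [Function.comp_apply]
    field_simp
    ring
  have hL : ∀ᶠ i in l, 0 < L i := by
    filter_upwards [hratio.eventually (eventually_gt_nhds one_pos), hw.eventually_gt_atTop 0]
      with i hi hwi
    simpa [div_mul_cancel₀ _ hwi.ne'] using mul_pos hi hwi
  have := h.neg.add ((continuousAt_log one_ne_zero).tendsto.comp hratio)
  rw [neg_zero, log_one, add_zero] at this
  refine this.congr' ?_
  filter_upwards [hL, hw.eventually_gt_atTop 0] with i hLi hwi
  rw [Function.comp_apply, log_div hLi.ne' hwi.ne', log_mul hc.ne' hLi.ne',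
    log_mul hc.ne' hwi.ne']
  ring

theorem quantile_asymptotics :
    Filter.Tendsto
      (fun α : ℝ => (PhiInv α) ^ 2 - (-2 * Real.log α - Real.log (-4 * Real.pi * Real.log α)))
      (𝓝[>] 0) (𝓝 0) := by
  have hz : Tendsto (fun α => -PhiInv α) (𝓝[>] 0) atTop :=
    tendsto_neg_atBot_atTop.comp tendsto_PhiInv_nhdsGT_zero
  have htail : ∀ᶠ α in 𝓝[>] 0, gaussianTail (-PhiInv α) = α := by
    filter_upwards [Ioo_mem_nhdsGT one_pos] with α hα
    rw [← Phi_eq_gaussianTail_neg, Phi_PhiInv hα]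
  have hlog : Tendsto (fun α => -2 * log α - ((-PhiInv α) ^ 2 + log (2 * π * (-PhiInv α) ^ 2)))
      (𝓝[>] 0) (𝓝 0) :=
    (tendsto_neg_two_mul_log_gaussianTail_sub.comp hz).congr'
      (htail.mono fun α hα => by rw [Function.comp_apply, hα])
  refine (tendsto_sub_add_log_mul two_pi_pos ((tendsto_pow_atTop two_ne_zero).comp hz)
    hlog).congr fun α => ?_
  rw [Function.comp_apply, neg_sq, show -4 * π * log α = 2 * π * (-2 * log α) by ring]
  ring
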